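/- arXiv:1905.12704 — 2 statements merged into one kernel-verified Lean document; each statement's English description precedes it below -/
import Mathlib

section
/- Let G be a group containing elements h₁ and h₂ that do not commute, but such that h₁ commutes with h₂^n for some integer n > 1, and set g = [h₂,h₁] = h₂⁻¹h₁⁻¹h₂h₁. Then g ≠ 1, and for every field k and every nonzero c ∈ k with c^n ≠ 1, the two-sided ideal of the group algebra kG generated by g − c equals all of kG. In particular, such a group G is not resistant. -/
/-- A group `G` is resistant if for every field `k`, every element of the group algebra `k G`
whose support has cardinality `> 1` generates a proper two-sided ideal of `k G`. -/
def Resistant (G : Type*) [Group G] : Prop :=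
  ∀ (k : Type*) [Field k] (r : MonoidAlgebra k G), 1 < r.coeff.support.card →
    TwoSidedIdeal.span {r} ≠ ⊤

private lemma step_identity {R : Type*} [Ring R] (A B s : R)
    (hA : ∀ x : R, s * x = x * s) (j : ℕ) :
    A ^ (j + 1) * B ^ (j + 1) - s ^ (j + 1)
      = A ^ j * (A * B - s) * B ^ j + s * (A ^ j * B ^ j - s ^ j) := by
  have h1 : A ^ j * s * B ^ j = s * (A ^ j * B ^ j) := by
    rw [← hA (A ^ j), mul_assoc]
  rw [mul_sub, sub_mul, mul_sub, h1]
  noncomm_ring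
  rw [show B ^ j * B = B * B ^ j from (pow_succ B j).symm.trans (pow_succ' B j),
    show s ^ j * s = s * s ^ j from (pow_succ s j).symm.trans (pow_succ' s j)]

private lemma span_top_aux {G : Type*} [Group G] (h₁ h₂ : G) (n : ℕ)
    (hcomm : h₁ * h₂ ^ n = h₂ ^ n * h₁)
    (k : Type*) [Field k] (c : k) (hcn : c ^ n ≠ 1) :
    TwoSidedIdeal.span
      {MonoidAlgebra.of k G (h₂⁻¹ * h₁⁻¹ * h₂ * h₁) -
        algebraMap k (MonoidAlgebra k G) c} = ⊤ := by
  set t : G := h₁⁻¹ * h₂ * h₁ with ht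
  have htn : t ^ n = h₂ ^ n := by
    have h' : t = h₁⁻¹ * h₂ * h₁⁻¹⁻¹ := by rw [ht, inv_inv]
    rw [h', conj_pow, inv_inv, mul_assoc, ← hcomm, ← mul_assoc, inv_mul_cancel, one_mul]
  have hgt : h₂⁻¹ * h₁⁻¹ * h₂ * h₁ = h₂⁻¹ * t := by rw [ht]; group
  set A : MonoidAlgebra k G := MonoidAlgebra.of k G h₂⁻¹ with hA
  set B : MonoidAlgebra k G := MonoidAlgebra.of k G t with hB
  set s : MonoidAlgebra k G := algebraMap k (MonoidAlgebra k G) c with hs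
  set r : MonoidAlgebra k G := MonoidAlgebra.of k G (h₂⁻¹ * h₁⁻¹ * h₂ * h₁) -
    algebraMap k (MonoidAlgebra k G) c with hr
  have hrAB : r = A * B - s := by
    rw [hr, hA, hB, hs, ← map_mul, ← hgt]
  set I : TwoSidedIdeal (MonoidAlgebra k G) := TwoSidedIdeal.span {r} with hI
  have hrI : r ∈ I := TwoSidedIdeal.subset_span rfl
  have hscomm : ∀ x : MonoidAlgebra k G, s * x = x * s := fun x => Algebra.commutes c x
  have key : ∀ j : ℕ, A ^ j * B ^ j - s ^ j ∈ I := by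
    intro j
    induction j with
    | zero => simpa using I.zero_mem
    | succ j ih =>
      rw [step_identity A B s hscomm j]
      exact I.add_mem
        (I.mul_mem_right _ _ (I.mul_mem_left _ _ (hrAB ▸ hrI)))
        (I.mul_mem_left _ _ ih)
  have hgrp : (h₂⁻¹) ^ n * t ^ n = 1 := by
    rw [htn, inv_pow, inv_mul_cancel]
  have hABn : A ^ n * B ^ n = 1 := by
    rw [hA, hB, ← map_pow, ← map_pow, ← map_mul, hgrp, map_one]
  have h1 : (1 : MonoidAlgebra k G) - s ^ n ∈ I := by
    have := key n
    rwa [hABn] at this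
  have hsn : s ^ n = algebraMap k (MonoidAlgebra k G) (c ^ n) := by
    rw [hs, map_pow]
  have hunit : (1 : MonoidAlgebra k G) ∈ I := by
    have h2 : algebraMap k (MonoidAlgebra k G) (1 - c ^ n)⁻¹ * ((1 : MonoidAlgebra k G) - s ^ n)
        ∈ I := I.mul_mem_left _ _ h1
    have h3 : algebraMap k (MonoidAlgebra k G) (1 - c ^ n)⁻¹ * ((1 : MonoidAlgebra k G) - s ^ n)
        = 1 := by
      rw [hsn, ← map_one (algebraMap k (MonoidAlgebra k G)), ← map_sub, ← map_mul,
        inv_mul_cancel₀ (sub_ne_zero.mpr (Ne.symm hcn)), map_one]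
    rwa [h3] at h2
  exact TwoSidedIdeal.eq_top _ hunit

/-- If `G` contains non-commuting elements `h₁, h₂` such that `h₁` commutes with `h₂^n` for
some `n > 1`, then with `g = [h₂,h₁] = h₂⁻¹h₁⁻¹h₂h₁` one has `g ≠ 1`, and for every field
`k` and nonzero `c ∈ k` with `c^n ≠ 1`, the two-sided ideal of `k G` generated by `g - c` is
all of `k G`; in particular, `G` is not resistant. -/
theorem not_resistant_of_commuting_power {G : Type*} [Group G] (h₁ h₂ : G)
    (hnc : h₁ * h₂ ≠ h₂ * h₁) (n : ℕ) (hn : 1 < n)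
    (hcomm : h₁ * h₂ ^ n = h₂ ^ n * h₁) :
    h₂⁻¹ * h₁⁻¹ * h₂ * h₁ ≠ 1 ∧
    (∀ (k : Type*) [Field k] (c : k), c ≠ 0 → c ^ n ≠ 1 →
      TwoSidedIdeal.span
        {MonoidAlgebra.of k G (h₂⁻¹ * h₁⁻¹ * h₂ * h₁) -
          algebraMap k (MonoidAlgebra k G) c} = ⊤) ∧
    ¬ Resistant G := by
  classical
  have hg1 : h₂⁻¹ * h₁⁻¹ * h₂ * h₁ ≠ 1 := by
    intro h
    open scoped commutatorElement in rw [show h₂⁻¹ * h₁⁻¹ * h₂ * h₁ = ⁅h₂⁻¹, h₁⁻¹⁆ by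
      rw [commutatorElement_def, inv_inv, inv_inv]] at h
    have h' := commutatorElement_eq_one_iff_mul_comm.mp h
    rw [← mul_inv_rev, ← mul_inv_rev] at h'
    exact hnc (inv_injective h')
  refine ⟨hg1, fun k _ c _ hcn => span_top_aux h₁ h₂ n hcomm k c hcn, ?_⟩
  intro hres
  set k := ULift ℚ with hk
  have hd2 : ((2 : k)).down = (2 : ℚ) := rfl
  have h2z : (2 : k) ≠ 0 := by
    intro h
    have := congrArg ULift.down h
    rw [hd2] at this
    norm_num at this
  have h2n : (2 : k) ^ n ≠ 1 := by
    intro h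
    have := congrArg ULift.down h
    have hdp : ((2 : k) ^ n).down = (2 : ℚ) ^ n := by
      rw [show ((2:k)^n).down = (ULift.ringEquiv (R := ℚ)) ((2:k)^n) from rfl, map_pow]
      rfl
    rw [hdp] at this
    have hgt : (1:ℚ) < 2 ^ n := one_lt_pow₀ (by norm_num) (by omega)
    rw [show ((1:k)).down = (1:ℚ) from rfl] at this
    rw [this] at hgt
    exact lt_irrefl _ hgt
  set r : MonoidAlgebra k G := MonoidAlgebra.of k G (h₂⁻¹ * h₁⁻¹ * h₂ * h₁) -
    algebraMap k (MonoidAlgebra k G) 2 with hr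
  have hmap : algebraMap k (MonoidAlgebra k G) 2 = MonoidAlgebra.single 1 (2 : k) := by
    rw [show algebraMap k (MonoidAlgebra k G) 2
      = MonoidAlgebra.single 1 (algebraMap k k 2) from rfl, Algebra.algebraMap_self_apply]
  have hrsupp : r = MonoidAlgebra.single (h₂⁻¹ * h₁⁻¹ * h₂ * h₁) (1 : k)
      + MonoidAlgebra.single 1 (-2 : k) := by
    rw [hr, sub_eq_add_neg, hmap]
    congr 1
    rw [MonoidAlgebra.single_neg]
  have hcard : 1 < r.coeff.support.card := by
    rw [hrsupp, MonoidAlgebra.coeff_add, MonoidAlgebra.coeff_single, MonoidAlgebra.coeff_single,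
      Finsupp.support_add_eq, Finsupp.support_single_ne_zero _ one_ne_zero,
      Finsupp.support_single_ne_zero _ (neg_ne_zero.mpr h2z),
      Finset.card_union_of_disjoint (Finset.disjoint_singleton.mpr hg1)]
    · simp
    · rw [Finsupp.support_single_ne_zero _ one_ne_zero,
        Finsupp.support_single_ne_zero _ (neg_ne_zero.mpr h2z)]
      exact Finset.disjoint_singleton.mpr hg1
  exact hres k r hcard (span_top_aux h₁ h₂ n hcomm k 2 h2n)
end

section
/- Let F be a free group. Then for every g ∈ F with g ≠ 1, the image of g in the quotient group F/[g,F] has infinite order. Consequently, for every field k, every element of the group algebra kF whose support has cardinality exactly 2 generates a proper two-sided ideal of kF (no binomial element of kF generates the improper ideal). -/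
/-- `[g,G]`: the subgroup of `G` generated by the commutators `[g,h] = g⁻¹h⁻¹gh` (`h ∈ G`).
It is a normal subgroup of `G`. -/
def commutatorSubgroup {G : Type*} [Group G] (g : G) : Subgroup G :=
  Subgroup.closure {x : G | ∃ h : G, x = g⁻¹ * h⁻¹ * g * h}

instance commutatorSubgroup_normal {G : Type*} [Group G] (g : G) :
    (commutatorSubgroup g).Normal := by
  constructor
  have key : ∀ n ∈ commutatorSubgroup g, ∀ k : G, k * n * k⁻¹ ∈ commutatorSubgroup g := by
    intro n hn
    induction hn using Subgroup.closure_induction with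
    | mem x hx =>
      intro k
      obtain ⟨h, rfl⟩ := hx
      have e : k * (g⁻¹ * h⁻¹ * g * h) * k⁻¹
          = (g⁻¹ * (k⁻¹)⁻¹ * g * k⁻¹)⁻¹ * (g⁻¹ * (h * k⁻¹)⁻¹ * g * (h * k⁻¹)) := by
        group
      rw [e]
      exact mul_mem (inv_mem (Subgroup.subset_closure ⟨k⁻¹, rfl⟩))
        (Subgroup.subset_closure ⟨h * k⁻¹, rfl⟩)
    | one =>
      intro k; simpa using one_mem _
    | mul x y hx hy ihx ihy =>
      intro k
      have e : k * (x * y) * k⁻¹ = (k * x * k⁻¹) * (k * y * k⁻¹) := by group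
      rw [e]; exact mul_mem (ihx k) (ihy k)
    | inv x hx ihx =>
      intro k
      have e : k * x⁻¹ * k⁻¹ = (k * x * k⁻¹)⁻¹ := by group
      rw [e]; exact inv_mem (ihx k)
  intro n hn k
  exact key n hn k


section Mag

variable {α : Type*}

/-- Noncommutative power series over `ℤ` in variables `α`, as coefficient functions on words. -/
def Mag (α : Type*) : Type _ := List α → ℤ

namespace Mag

open scoped Classical

instance : AddCommGroup (Mag α) := inferInstanceAs (AddCommGroup (List α → ℤ))

noncomputable instance : One (Mag α) := ⟨fun w => if w = [] then 1 else 0⟩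

instance : Mul (Mag α) :=
  ⟨fun f g w => ∑ i ∈ Finset.range (w.length + 1), f (w.take i) * g (w.drop i)⟩

lemma mul_apply (f g : Mag α) (w : List α) :
    (f * g) w = ∑ i ∈ Finset.range (w.length + 1), f (w.take i) * g (w.drop i) := rfl

lemma one_apply (w : List α) : (1 : Mag α) w = if w = [] then 1 else 0 := rfl

lemma add_apply (f g : Mag α) (w : List α) : (f + g) w = f w + g w := rfl
lemma zero_apply (w : List α) : (0 : Mag α) w = 0 := rfl
lemma neg_apply (f : Mag α) (w : List α) : (-f) w = -(f w) := rfl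
lemma sub_apply (f g : Mag α) (w : List α) : (f - g) w = f w - g w := rfl
lemma zsmul_apply (n : ℤ) (f : Mag α) (w : List α) : (n • f) w = n * f w := rfl

lemma mul_nil (f g : Mag α) : (f * g) [] = f [] * g [] := by
  simp [mul_apply]

lemma one_mul' (f : Mag α) : 1 * f = f := by
  funext w
  rw [mul_apply]
  rw [Finset.sum_eq_single 0]
  · simp [one_apply]
  · intro i hi hi0
    have : w.take i ≠ [] := by
      rw [Ne, List.take_eq_nil_iff]
      rintro (h1 | h1)
      · exact hi0 h1
      · subst h1; simp at hi; omega
    simp [one_apply, this]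
  · intro h; simp at h

lemma mul_one' (f : Mag α) : f * 1 = f := by
  funext w
  rw [mul_apply]
  rw [Finset.sum_eq_single w.length]
  · simp [one_apply]
  · intro i hi hi0
    have : w.drop i ≠ [] := by
      rw [Ne, List.drop_eq_nil_iff]
      simp at hi; omega
    simp [one_apply, this]
  · intro h; simp at h

lemma mul_assoc' (f g h : Mag α) : f * g * h = f * (g * h) := by
  funext w
  rw [mul_apply, mul_apply]
  have L : ∀ i ∈ Finset.range (w.length + 1),
      (f * g) (w.take i) * h (w.drop i)
        = ∑ j ∈ Finset.range (i + 1), f (w.take j) * g ((w.drop j).take (i - j)) * h (w.drop i) := by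
    intro i hi
    simp only [Finset.mem_range] at hi
    rw [mul_apply, Finset.sum_mul]
    have hlen : (w.take i).length = i := by simp; omega
    rw [hlen]
    refine Finset.sum_congr rfl fun j hj => ?_
    simp only [Finset.mem_range] at hj
    rw [List.take_take, min_eq_left (by omega), List.drop_take]
  have R : ∀ j ∈ Finset.range (w.length + 1),
      f (w.take j) * (g * h) (w.drop j)
        = ∑ m ∈ Finset.range (w.length - j + 1), f (w.take j) * (g ((w.drop j).take m) * h ((w.drop j).drop m)) := by
    intro j hj
    simp only [Finset.mem_range] at hj
    rw [mul_apply, Finset.mul_sum]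
    have hlen : (w.drop j).length = w.length - j := by simp
    rw [hlen]
  rw [Finset.sum_congr rfl L, Finset.sum_congr rfl R]
  rw [Finset.sum_sigma', Finset.sum_sigma']
  refine Finset.sum_nbij' (fun p => ⟨p.2, p.1 - p.2⟩) (fun p => ⟨p.1 + p.2, p.1⟩) ?_ ?_ ?_ ?_ ?_
  · rintro ⟨i, j⟩ hij
    simp only [Finset.mem_sigma, Finset.mem_range] at hij ⊢
    omega
  · rintro ⟨j, m⟩ hjm
    simp only [Finset.mem_sigma, Finset.mem_range] at hjm ⊢
    omega
  · rintro ⟨i, j⟩ hij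
    simp only [Finset.mem_sigma, Finset.mem_range] at hij
    dsimp only
    rw [show j + (i - j) = i by omega]
  · rintro ⟨j, m⟩ hjm
    simp only [Finset.mem_sigma, Finset.mem_range] at hjm
    dsimp only
    rw [show j + m - j = m by omega]
  · rintro ⟨i, j⟩ hij
    simp only [Finset.mem_sigma, Finset.mem_range] at hij
    dsimp only
    have h1 : (w.drop j).drop (i - j) = w.drop i := by
      rw [List.drop_drop]; congr 1; omega
    rw [← h1, mul_assoc]

lemma left_distrib' (f g h : Mag α) : f * (g + h) = f * g + f * h := by
  funext w
  simp only [mul_apply, add_apply, ← Finset.sum_add_distrib]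
  exact Finset.sum_congr rfl fun i _ => by ring

lemma right_distrib' (f g h : Mag α) : (f + g) * h = f * h + g * h := by
  funext w
  simp only [mul_apply, add_apply, ← Finset.sum_add_distrib]
  exact Finset.sum_congr rfl fun i _ => by ring

lemma zero_mul' (f : Mag α) : 0 * f = 0 := by
  funext w; simp [mul_apply, zero_apply]

lemma mul_zero' (f : Mag α) : f * 0 = 0 := by
  funext w; simp [mul_apply, zero_apply]

noncomputable instance : Ring (Mag α) :=
  { (inferInstance : AddCommGroup (Mag α)), (inferInstance : Mul (Mag α)),
    (inferInstance : One (Mag α)) with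
    left_distrib := left_distrib'
    right_distrib := right_distrib'
    zero_mul := zero_mul'
    mul_zero := mul_zero'
    mul_assoc := mul_assoc'
    one_mul := one_mul'
    mul_one := mul_one' }


/-- The augmentation (constant coefficient). -/
noncomputable def eps : Mag α →+* ℤ where
  toFun f := f []
  map_one' := by simp [one_apply]
  map_mul' f g := mul_nil f g
  map_zero' := rfl
  map_add' f g := rfl

lemma eps_apply (f : Mag α) : eps f = f [] := rfl

/-- The variable `X a`. -/
noncomputable def X (a : α) : Mag α := fun w => if w = [a] then 1 else 0

/-- The inverse of `1 + X a`. -/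
noncomputable def V (a : α) : Mag α :=
  fun w => if ∀ x ∈ w, x = a then (-1) ^ w.length else 0

lemma X_apply (a : α) (w : List α) : X a w = if w = [a] then 1 else 0 := rfl
lemma V_apply (a : α) (w : List α) :
    V a w = if ∀ x ∈ w, x = a then (-1) ^ w.length else 0 := rfl

lemma X_nil (a : α) : X a [] = 0 := by simp [X_apply]
lemma V_nil (a : α) : V a [] = 1 := by simp [V_apply]

lemma X_cons (a x : α) (t : List α) :
    X a (x :: t) = if x = a ∧ t = [] then 1 else 0 := by
  simp only [X_apply, List.cons.injEq]

lemma V_cons (a x : α) (t : List α) :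
    V a (x :: t) = if x = a then - V a t else 0 := by
  simp only [V_apply, List.forall_mem_cons, List.length_cons, pow_succ]
  by_cases hx : x = a
  · by_cases ht : ∀ y ∈ t, y = a
    · rw [if_pos ⟨hx, ht⟩, if_pos hx, if_pos ht]; ring
    · rw [if_neg (by tauto), if_pos hx, if_neg ht]; ring
  · rw [if_neg (by tauto), if_neg hx]

/-- Left shift: coefficients of words starting with `x`. -/
noncomputable def shift (x : α) (f : Mag α) : Mag α := fun u => f (x :: u)

lemma shift_apply (x : α) (f : Mag α) (u : List α) : shift x f u = f (x :: u) := rfl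

lemma mul_cons (f g : Mag α) (x : α) (t : List α) :
    (f * g) (x :: t) = f [] * g (x :: t) + (shift x f * g) t := by
  rw [mul_apply, show (x :: t).length + 1 = t.length + 1 + 1 from rfl, Finset.sum_range_succ']
  rw [mul_apply]
  simp only [List.take_succ_cons, List.drop_succ_cons, List.take_zero, List.drop_zero]
  rw [add_comm]
  rfl

lemma shift_one (a : α) : shift a (1 + X a) = 1 := by
  funext u
  rw [shift_apply, add_apply, one_apply, X_cons]
  by_cases hu : u = [] <;> simp [hu, one_apply]

lemma shift_ne (a x : α) (hx : x ≠ a) : shift x (1 + X a) = 0 := by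
  funext u
  rw [shift_apply, add_apply, one_apply, X_cons]
  simp [hx, zero_apply]

lemma shiftV_eq (a : α) : shift a (V a) = - V a := by
  funext u
  rw [shift_apply, V_cons, neg_apply]
  simp

lemma shiftV_ne (a x : α) (hx : x ≠ a) : shift x (V a) = 0 := by
  funext u
  rw [shift_apply, V_cons]
  simp [hx, zero_apply]

lemma sv (a : α) : (1 + X a) * V a = 1 := by
  funext w
  cases w with
  | nil => rw [mul_nil]; simp [add_apply, one_apply, X_nil, V_nil]
  | cons x t =>
    rw [mul_cons]
    by_cases hx : x = a
    · subst hx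
      rw [shift_one, one_mul']
      simp only [add_apply, one_apply, X_nil, if_pos rfl]
      rw [V_cons, if_pos rfl]
      simp [one_apply]
    · rw [shift_ne a x hx, zero_mul']
      simp only [add_apply, one_apply, X_nil, if_pos rfl]
      rw [V_cons, if_neg hx]
      simp [one_apply, zero_apply]

lemma vs (a : α) : V a * (1 + X a) = 1 := by
  funext w
  induction w with
  | nil => rw [mul_nil]; simp [add_apply, one_apply, X_nil, V_nil]
  | cons x t ih =>
    rw [mul_cons, V_nil, one_mul]
    by_cases hx : x = a
    · subst hx
      rw [shiftV_eq, neg_mul, neg_apply, ih]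
      simp only [add_apply, one_apply, X_cons]
      cases t with
      | nil => simp [one_apply]
      | cons y u => simp [one_apply]
    · rw [shiftV_ne a x hx, zero_mul', zero_apply]
      simp [add_apply, one_apply, X_cons, hx]

/-- The unit `1 + X a`. -/
noncomputable def U (a : α) : (Mag α)ˣ := ⟨1 + X a, V a, sv a, vs a⟩

lemma U_inv_val (a : α) : ((U a)⁻¹ : (Mag α)ˣ).val = V a := rfl
lemma U_val (a : α) : (U a).val = 1 + X a := rfl

/-- All words in the support consist only of the letter `a`. -/
def OnlyA (a : α) (f : Mag α) : Prop := ∀ w, f w ≠ 0 → ∀ x ∈ w, x = a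

lemma onlyA_one (a : α) : OnlyA a (1 : Mag α) := by
  intro w hw x hx
  by_cases h : w = []
  · subst h; simp at hx
  · rw [one_apply, if_neg h] at hw; exact absurd rfl hw

lemma OnlyA.mul {a : α} {f g : Mag α} (hf : OnlyA a f) (hg : OnlyA a g) :
    OnlyA a (f * g) := by
  intro w hw x hx
  rw [mul_apply] at hw
  obtain ⟨i, -, hi⟩ := Finset.exists_ne_zero_of_sum_ne_zero hw
  have hx' : x ∈ w.take i ++ w.drop i := by rw [List.take_append_drop]; exact hx
  rcases List.mem_append.mp hx' with h | h
  · exact hf _ (left_ne_zero_of_mul hi) x h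
  · exact hg _ (right_ne_zero_of_mul hi) x h

lemma onlyA_U (a : α) : OnlyA a (U a).val := by
  intro w hw x hx
  rw [U_val, add_apply] at hw
  by_cases h : w = []
  · subst h; simp at hx
  · rw [one_apply, if_neg h, X_apply] at hw
    by_cases h2 : w = [a]
    · subst h2; simpa using hx
    · rw [if_neg h2] at hw; simp at hw

lemma onlyA_Uinv (a : α) : OnlyA a ((U a)⁻¹ : (Mag α)ˣ).val := by
  intro w hw x hx
  rw [U_inv_val, V_apply] at hw
  by_cases h : ∀ y ∈ w, y = a
  · exact h x hx
  · rw [if_neg h] at hw; exact absurd rfl hw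

lemma onlyA_U_zpow (a : α) (n : ℤ) : OnlyA a ((U a ^ n : (Mag α)ˣ)).val := by
  induction n using Int.induction_on with
  | zero => simpa using onlyA_one a
  | succ n ih =>
    rw [zpow_add_one, Units.val_mul]
    exact ih.mul (onlyA_U a)
  | pred n ih =>
    rw [zpow_sub_one, Units.val_mul]
    exact ih.mul (onlyA_Uinv a)

lemma mul_single (f g : Mag α) (a : α) :
    (f * g) [a] = f [] * g [a] + f [a] * g [] := by
  rw [mul_cons, mul_nil, shift_apply]

lemma U_zpow_nil (a : α) (n : ℤ) : (U a ^ n : (Mag α)ˣ).val [] = 1 := by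
  induction n using Int.induction_on with
  | zero => simp [one_apply]
  | succ n ih =>
    rw [zpow_add_one, Units.val_mul, mul_nil, ih, U_val, add_apply, one_apply, X_nil]
    simp
  | pred n ih =>
    rw [zpow_sub_one, Units.val_mul, mul_nil, ih, U_inv_val, V_nil]
    simp

lemma U_zpow_single (a : α) (n : ℤ) : (U a ^ n : (Mag α)ˣ).val [a] = n := by
  induction n using Int.induction_on with
  | zero => simp [one_apply]
  | succ n ih =>
    rw [zpow_add_one, Units.val_mul, mul_single, ih, U_zpow_nil, U_val, add_apply, add_apply,
      one_apply, one_apply, X_nil, X_apply, if_pos rfl]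
    simp
    ring
  | pred n ih =>
    rw [zpow_sub_one, Units.val_mul, mul_single, ih, U_zpow_nil, U_inv_val, V_nil, V_cons,
      if_pos rfl, V_nil]
    push_cast
    ring

/-- `Pat L w`: `w` is a concatenation of powers of the letters of `L`, in order. -/
inductive Pat : List α → List α → Prop
  | nil : Pat [] []
  | cons (m : ℕ) (a : α) {L w : List α} : Pat L w → Pat (a :: L) (List.replicate m a ++ w)

lemma Pat.nil_inv {w : List α} (h : Pat [] w) : w = [] := by cases h; rfl

/-- squarefree-ification: remove adjacent duplicates. -/
noncomputable def sq : List α → List α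
  | [] => []
  | a :: t => match sq t with
    | [] => [a]
    | b :: r => if a = b then b :: r else a :: b :: r

lemma sq_cons (a : α) (t : List α) :
    sq (a :: t) = match sq t with
      | [] => [a]
      | b :: r => if a = b then b :: r else a :: b :: r := rfl

lemma sq_head (a : α) (t : List α) : ∃ r, sq (a :: t) = a :: r := by
  rw [sq_cons]
  cases h : sq t with
  | nil => exact ⟨[], rfl⟩
  | cons b r =>
    by_cases hab : a = b
    · subst hab; simp only [if_pos rfl]; exact ⟨r, rfl⟩
    · simp only [if_neg hab]; exact ⟨b :: r, rfl⟩

lemma sq_cons_cons (a : α) (t : List α) : sq (a :: a :: t) = sq (a :: t) := by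
  obtain ⟨r, hr⟩ := sq_head a t
  rw [sq_cons, hr]
  dsimp only
  rw [if_pos rfl, ← hr]

lemma sq_cons_of_ne (a b : α) (t : List α) (h : a ≠ b) :
    sq (a :: b :: t) = a :: sq (b :: t) := by
  obtain ⟨r, hr⟩ := sq_head b t
  rw [sq_cons, hr]
  dsimp only
  rw [if_neg h, ← hr]

lemma chain'_sq (t : List α) : (sq t).Chain' (· ≠ ·) := by
  induction t with
  | nil => simp [sq, List.Chain']
  | cons a t ih =>
    cases t with
    | nil => simp [sq, List.Chain']
    | cons b t' =>
      by_cases hab : a = b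
      · subst hab; rwa [sq_cons_cons]
      · rw [sq_cons_of_ne a b t' hab]
        obtain ⟨r, hr⟩ := sq_head b t'
        rw [hr] at ih ⊢
        exact List.IsChain.cons_cons hab ih

lemma sq_sublist_cons (a : α) (L : List α) : (sq L).Sublist (sq (a :: L)) := by
  cases L with
  | nil => simp [sq]
  | cons b t =>
    by_cases hab : a = b
    · subst hab; rw [sq_cons_cons]
    · rw [sq_cons_of_ne a b t hab]
      exact List.sublist_cons_self a _

lemma sublist_of_cons_of_head_ne {w r : List α} {a : α} (h : w.Sublist (a :: r))
    (hh : ∀ y ∈ w.head?, y ≠ a) : w.Sublist r := by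
  cases h with
  | cons _ h => exact h
  | cons_cons _ h => exact absurd rfl (hh a rfl)

lemma pat_sublist_sq {L w : List α} (h : Pat L w) (hc : w.Chain' (· ≠ ·)) : w.Sublist (sq L) := by
  induction h with
  | nil => exact List.Sublist.refl _
  | cons m a h ih =>
    rename_i L' w'
    rcases m with _ | _ | m
    ·
      simp only [List.replicate_zero, List.nil_append] at hc ⊢
      exact (ih hc).trans (sq_sublist_cons a L')
    ·
      simp only [List.replicate_succ, List.replicate_zero, List.nil_append,
        List.cons_append] at hc ⊢
      have hc' : w'.Chain' (· ≠ ·) := (List.isChain_cons.mp hc).2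
      have hhd : ∀ y ∈ w'.head?, a ≠ y := (List.isChain_cons.mp hc).1
      cases L' with
      | nil =>
        rw [h.nil_inv]
        simp [sq]
      | cons b t =>
        by_cases hab : a = b
        · subst hab
          rw [sq_cons_cons]
          obtain ⟨r, hr⟩ := sq_head a t
          have hw' : w'.Sublist r := by
            apply sublist_of_cons_of_head_ne (hr ▸ ih hc')
            intro y hy
            exact fun hya => (hhd y hy) hya.symm
          rw [hr]
          exact List.Sublist.cons₂ a hw'
        · rw [sq_cons_of_ne a b t hab]
          exact List.Sublist.cons₂ a (ih hc')
    · exfalso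
      rw [List.replicate_succ, List.replicate_succ, List.cons_append, List.cons_append] at hc
      exact (List.isChain_cons_cons.mp hc).1 rfl

/-- `Supp f L`: every word in the support of `f` matches the pattern `L`. -/
def Supp (f : Mag α) (L : List α) : Prop := ∀ w, f w ≠ 0 → Pat L w

lemma supp_mul {f g : Mag α} {a : α} {L : List α}
    (hf : OnlyA a f) (hg : Supp g L) : Supp (f * g) (a :: L) := by
  intro w hw
  rw [mul_apply] at hw
  obtain ⟨i, -, hi⟩ := Finset.exists_ne_zero_of_sum_ne_zero hw
  have h1 := hf _ (left_ne_zero_of_mul hi)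
  have h2 := hg _ (right_ne_zero_of_mul hi)
  have h3 : w.take i = List.replicate (w.take i).length a := List.eq_replicate_of_mem h1
  have h4 : Pat (a :: L) (w.take i ++ w.drop i) := by
    rw [h3]; exact Pat.cons _ a h2
  rwa [List.take_append_drop] at h4

/-- The Magnus image of a word. -/
noncomputable def pw (l : List (α × Bool)) : (Mag α)ˣ :=
  (l.map fun p => cond p.2 (U p.1) (U p.1)⁻¹).prod

lemma pw_nil : pw ([] : List (α × Bool)) = 1 := rfl

lemma pw_cons (p : α × Bool) (l : List (α × Bool)) :
    pw (p :: l) = (cond p.2 (U p.1) (U p.1)⁻¹) * pw l := by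
  simp [pw]

lemma pw_append (u v : List (α × Bool)) : pw (u ++ v) = pw u * pw v := by
  simp [pw]

lemma onlyA_cond (p : α × Bool) : OnlyA p.1 (cond p.2 (U p.1) (U p.1)⁻¹).val := by
  cases hb : p.2
  · simpa using onlyA_Uinv p.1
  · simpa using onlyA_U p.1

lemma supp_pw (l : List (α × Bool)) : Supp (pw l).val (l.map Prod.fst) := by
  induction l with
  | nil =>
    intro w hw
    by_cases h : w = []
    · subst h; exact Pat.nil
    · rw [pw_nil, Units.val_one, one_apply, if_neg h] at hw
      exact absurd rfl hw
  | cons p l ih =>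
    rw [pw_cons, Units.val_mul]
    exact supp_mul (onlyA_cond p) ih

lemma sq_head? (t : List α) : (sq t).head? = t.head? := by
  cases t with
  | nil => rfl
  | cons a t => obtain ⟨r, hr⟩ := sq_head a t; rw [hr]; rfl

lemma sq_replicate_append (a : α) (L : List α) (hL : ∀ c ∈ L.head?, c ≠ a) :
    ∀ k : ℕ, sq (List.replicate (k + 1) a ++ L) = a :: sq L := by
  intro k
  induction k with
  | zero =>
    rw [List.replicate_succ, List.replicate_zero, List.cons_append, List.nil_append]
    cases L with
    | nil => rfl
    | cons c t => exact sq_cons_of_ne a c t (fun h => hL c rfl h.symm)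
  | succ k ih =>
    rw [List.replicate_succ, List.cons_append]
    have h1 : List.replicate (k + 1) a ++ L = a :: (List.replicate k a ++ L) := by
      rw [List.replicate_succ, List.cons_append]
    rw [h1, sq_cons_cons, ← h1, ih]

theorem key : ∀ (n : ℕ) (l : List (α × Bool)), l.length ≤ n →
    l.Chain' (fun p q => p.1 = q.1 → p.2 = q.2) →
    (pw l).val (sq (l.map Prod.fst)) ≠ 0 := by
  intro n
  induction n with
  | zero =>
    intro l hl _
    have : l = [] := List.length_eq_zero_iff.mp (Nat.le_zero.mp hl)
    subst this
    rw [pw_nil, Units.val_one]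
    simp [sq, one_apply]
  | succ n ih =>
    intro l hl hred
    cases hl0 : l with
    | nil =>
      rw [pw_nil, Units.val_one]
      simp [sq, one_apply]
    | cons p l' =>
      subst hl0
      -- decompose the leading block
      set B := (p :: l').takeWhile (fun q => decide (q = p)) with hB
      set R := (p :: l').dropWhile (fun q => decide (q = p)) with hR
      have hBR : B ++ R = p :: l' := by
        rw [hB, hR]; exact List.takeWhile_append_dropWhile
      have hBmem : ∀ q ∈ B, q = p := by
        intro q hq
        have := List.mem_takeWhile_imp hq
        exact of_decide_eq_true this
      have hBcons : ∃ B', B = p :: B' := by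
        rw [hB, List.takeWhile_cons, if_pos (by simp)]
        exact ⟨_, rfl⟩
      obtain ⟨B', hB'⟩ := hBcons
      have hBrep : B = List.replicate B.length p := List.eq_replicate_of_mem hBmem
      set k := B'.length with hk
      have hBlen : B.length = k + 1 := by rw [hB']; simp [hk]
      -- R's head has a different letter
      set a := p.1 with ha
      have hRhead : ∀ c ∈ R.head?, c.1 ≠ a := by
        intro c hc h1
        have hcne : ¬ (c = p) := by
          have h2 := List.head?_dropWhile_not (fun q => decide (q = p)) (p :: l')
          rw [← hR, hc] at h2
          simpa using h2
        -- use reducedness across the B ++ R split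
        have hchain : (B ++ R).Chain' (fun p q => p.1 = q.1 → p.2 = q.2) := by
          rw [hBR]; exact hred
        have hlast : B.getLast? = some p := by
          have hne : B ≠ [] := by rw [hB']; simp
          rw [List.getLast?_eq_getLast hne]
          exact congrArg some (hBmem _ (List.getLast_mem hne))
        have hrel := (List.isChain_append.mp hchain).2.2 p hlast c hc
        exact hcne (Prod.ext (h1.trans ha) (hrel (h1.trans ha).symm).symm)
      -- product decomposition
      have hpw : pw (p :: l') = U a ^ (cond p.2 (k+1 : ℤ) (-(k+1))) * pw R := by
        rw [← hBR, pw_append]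
        congr 1
        rw [hBrep, hBlen]
        have : List.map (fun p => cond p.2 (U p.1) (U p.1)⁻¹) (List.replicate (k+1) p)
            = List.replicate (k+1) (cond p.2 (U a) (U a)⁻¹) := by
          rw [List.map_replicate]
        rw [pw, this, List.prod_replicate]
        cases hb : p.2
        · simp only [cond_false]
          rw [inv_pow, ← zpow_natCast, ← zpow_neg]
          norm_num
        · simp only [cond_true]
          rw [← zpow_natCast]
          norm_num
      -- letters decomposition
      have hmap : (p :: l').map Prod.fst = List.replicate (k+1) a ++ R.map Prod.fst := by
        rw [← hBR, List.map_append]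
        congr 1
        rw [hBrep, hBlen, List.map_replicate]
      have hLRhead : ∀ c ∈ (R.map Prod.fst).head?, c ≠ a := by
        intro c hc
        cases hRc : R with
        | nil => rw [hRc] at hc; simp at hc
        | cons q t =>
          rw [hRc] at hc
          simp only [List.map_cons, List.head?_cons, Option.mem_def, Option.some.injEq] at hc
          subst hc
          exact hRhead q (by rw [hRc]; rfl)
      have hsq : sq ((p :: l').map Prod.fst) = a :: sq (R.map Prod.fst) := by
        rw [hmap]; exact sq_replicate_append a _ hLRhead k
      set m' := sq (R.map Prod.fst) with hm'
      set y := (pw R).val with hy'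
      set n₀ : ℤ := cond p.2 (k+1 : ℤ) (-(k+1)) with hn₀
      set x := ((U a ^ n₀ : (Mag α)ˣ)).val with hx'
      -- the rest of the word is shorter and still reduced
      have hRlen : R.length ≤ n := by
        have := congrArg List.length hBR
        simp only [List.length_append, List.length_cons] at this
        simp only [List.length_cons] at hl
        omega
      have hredR : R.Chain' (fun p q => p.1 = q.1 → p.2 = q.2) := by
        have hchain : (B ++ R).Chain' (fun p q => p.1 = q.1 → p.2 = q.2) := by
          rw [hBR]; exact hred
        exact (List.isChain_append.mp hchain).2.1
      have hy : y m' ≠ 0 := ih R hRlen hredR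
      have hm'head : ∀ c ∈ m'.head?, c ≠ a := by
        rw [hm', sq_head?]; exact hLRhead
      rw [hpw, Units.val_mul, hsq]
      show (x * y) (a :: m') ≠ 0
      rw [mul_apply]
      rw [Finset.sum_eq_single 1]
      · have ht : (a :: m').take 1 = [a] := rfl
        have hd : (a :: m').drop 1 = m' := rfl
        rw [ht, hd, hx', U_zpow_single]
        apply mul_ne_zero _ hy
        rw [hn₀]
        cases p.2
        · simp only [cond_false]
          omega
        · simp only [cond_true]
          omega
      · intro i hi hi1
        simp only [Finset.mem_range, List.length_cons] at hi
        rcases i with _ | _ | i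
        · -- i = 0
          have h0 : y (a :: m') = 0 := by
            by_contra hne
            have hpat := supp_pw R _ hne
            have hchain : (a :: m').Chain' (· ≠ ·) := by
              refine List.isChain_cons.mpr ?_
              exact ⟨fun c hc => fun h => hm'head c hc h.symm, chain'_sq _⟩
            have hsub := pat_sublist_sq hpat hchain
            have := hsub.length_le
            rw [hm'] at this
            simp at this
          simp only [List.take_zero, List.drop_zero, h0, mul_zero]
        · exact absurd rfl hi1
        · -- i ≥ 2
          have hx0 : x ((a :: m').take (i + 2)) = 0 := by
            by_contra hne
            have honly := onlyA_U_zpow a n₀ _ hne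
            -- m' is nonempty
            cases hmc : m' with
            | nil => rw [hmc] at hi; simp at hi
            | cons c r =>
              have hc : c ∈ (a :: m').take (i + 2) := by
                rw [hmc]
                simp [List.take_succ_cons]
              have := honly c hc
              exact hm'head c (by rw [hmc]; rfl) this
          rw [hx0, zero_mul]
      · intro h1
        exact absurd (Finset.mem_range.mpr (by simp)) h1


/-- The Magnus homomorphism. -/
noncomputable def magnus : FreeGroup α →* (Mag α)ˣ := FreeGroup.lift fun a => U a

lemma magnus_apply_nil (g : FreeGroup α) : (magnus g).val [] = 1 := by
  have h : (Units.map (eps (α := α)).toMonoidHom).comp magnus = 1 := by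
    apply FreeGroup.ext_hom
    intro a
    apply Units.ext
    show eps ((magnus (FreeGroup.of a)).val) = 1
    have : magnus (FreeGroup.of a) = U a := FreeGroup.lift_apply_of
    rw [this]
    show (1 + X a : Mag α) [] = 1
    rw [add_apply, one_apply, X_nil]
    simp
  have h2 : (Units.map (eps (α := α)).toMonoidHom) (magnus g) = 1 := by
    rw [← MonoidHom.comp_apply, h]; rfl
  have h3 := congrArg Units.val h2
  exact h3

lemma chain'_of_noncancel (l : List (α × Bool))
    (h : ∀ (L2 L3 : List (α × Bool)) (x : α) (b : Bool),
      l ≠ L2 ++ (x, b) :: (x, !b) :: L3) :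
    l.Chain' (fun p q => p.1 = q.1 → p.2 = q.2) := by
  induction l with
  | nil => exact List.isChain_nil
  | cons p t ih =>
    cases t with
    | nil => exact List.isChain_singleton _
    | cons q t' =>
      refine List.isChain_cons_cons.mpr ?_
      constructor
      · intro h1
        by_contra h2
        have hq : q = (p.1, !p.2) := by
          obtain ⟨x, b⟩ := p
          obtain ⟨y, c⟩ := q
          simp only at h1 h2
          subst h1
          cases b <;> cases c <;> simp_all
        exact h [] t' p.1 p.2 (by rw [hq]; rfl)
      · apply ih
        intro L2 L3 x b heq
        exact h (p :: L2) L3 x b (by rw [heq]; rfl)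

lemma magnus_coeff (g : FreeGroup α) (hg : g ≠ 1) :
    ∃ w : List α, w ≠ [] ∧ (magnus g).val w ≠ 0 := by
  classical
  set l := g.toWord with hl
  have hlne : l ≠ [] := fun h => hg (FreeGroup.toWord_eq_nil_iff.mp h)
  have hchain : l.Chain' (fun p q => p.1 = q.1 → p.2 = q.2) := by
    apply chain'_of_noncancel
    intro L2 L3 x b heq
    exact FreeGroup.reduce.not (L₁ := l)
      (by rw [FreeGroup.reduce_toWord]; exact heq)
  have hmag : magnus g = pw l := by
    conv_lhs => rw [← FreeGroup.mk_toWord (x := g)]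
    rw [magnus, FreeGroup.lift_mk]
    rfl
  refine ⟨sq (l.map Prod.fst), ?_, ?_⟩
  · cases hc : l with
    | nil => exact absurd hc hlne
    | cons p t =>
      obtain ⟨r, hr⟩ := sq_head p.1 (t.map Prod.fst)
      rw [List.map_cons, hr]
      simp
  · rw [hmag]
    exact key l.length l le_rfl hchain

/-- Vanishing below degree `c`. -/
def Mlow (c : ℕ) (f : Mag α) : Prop := ∀ w : List α, w.length < c → f w = 0

namespace Mlow

lemma add {c : ℕ} {f g : Mag α} (hf : Mlow c f) (hg : Mlow c g) : Mlow c (f + g) := by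
  intro w hw; rw [add_apply, hf w hw, hg w hw]; ring

lemma neg {c : ℕ} {f : Mag α} (hf : Mlow c f) : Mlow c (-f) := by
  intro w hw; rw [neg_apply, hf w hw]; ring

lemma sub {c : ℕ} {f g : Mag α} (hf : Mlow c f) (hg : Mlow c g) : Mlow c (f - g) := by
  intro w hw; rw [sub_apply, hf w hw, hg w hw]; ring

lemma zsmul {c : ℕ} {f : Mag α} (hf : Mlow c f) (n : ℤ) : Mlow c (n • f) := by
  intro w hw; rw [zsmul_apply, hf w hw]; ring

lemma zero (c : ℕ) : Mlow c (0 : Mag α) := fun w _ => rfl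

lemma mul_left {c : ℕ} (f : Mag α) {g : Mag α} (hg : Mlow c g) : Mlow c (f * g) := by
  intro w hw
  rw [mul_apply]
  apply Finset.sum_eq_zero
  intro i hi
  rw [hg (w.drop i) (by simp; omega)]
  ring

lemma mul_right {c : ℕ} {f : Mag α} (g : Mag α) (hf : Mlow c f) : Mlow c (f * g) := by
  intro w hw
  rw [mul_apply]
  apply Finset.sum_eq_zero
  intro i hi
  simp only [Finset.mem_range] at hi
  rw [hf (w.take i) (by simp; omega)]
  ring

lemma mul {c d : ℕ} {f g : Mag α} (hf : Mlow c f) (hg : Mlow d g) : Mlow (c + d) (f * g) := by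
  intro w hw
  rw [mul_apply]
  apply Finset.sum_eq_zero
  intro i hi
  simp only [Finset.mem_range] at hi
  by_cases h : i < c
  · rw [hf (w.take i) (by simp; omega)]; ring
  · rw [hg (w.drop i) (by simp; omega)]; ring

lemma mono {c d : ℕ} {f : Mag α} (h : c ≤ d) (hf : Mlow d f) : Mlow c f :=
  fun w hw => hf w (by omega)

end Mlow

theorem zpow_mem_commClosure_imp (g : FreeGroup α) (hg : g ≠ 1) (n : ℤ)
    (hn : g ^ n ∈ Subgroup.closure {x : FreeGroup α | ∃ h, x = g⁻¹ * h⁻¹ * g * h}) :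
    n = 0 := by
  set A := magnus g with hA
  set u : Mag α := A.val - 1 with hu
  have hAval : A.val = 1 + u := by rw [hu]; noncomm_ring
  -- u is nonzero
  obtain ⟨w1, hw1ne, hw1⟩ := magnus_coeff g hg
  have hu1 : u w1 ≠ 0 := by
    rw [hu, sub_apply, one_apply, if_neg hw1ne]
    simpa using hw1
  -- minimal degree
  set S : Set ℕ := {c : ℕ | ∃ w : List α, w.length = c ∧ u w ≠ 0} with hS
  have hSne : S.Nonempty := ⟨w1.length, w1, rfl, hu1⟩
  set c := sInf S with hc
  obtain ⟨w0, hw0len, hw0⟩ := Nat.sInf_mem hSne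
  rw [← hc] at hw0len
  have hunil : u [] = 0 := by
    rw [hu, sub_apply, magnus_apply_nil, one_apply]
    simp
  have hc1 : 1 ≤ c := by
    rcases Nat.eq_zero_or_pos c with h0 | h
    · exfalso
      rw [h0] at hw0len
      rw [List.length_eq_zero_iff.mp hw0len] at hw0
      exact hw0 hunil
    · exact h
  have hMc : Mlow c u := by
    intro w hw
    by_contra hne
    have hle := Nat.sInf_le (show w.length ∈ S from ⟨w, rfl, hne⟩)
    rw [← hc] at hle
    omega
  -- first order vanishing for all group elements
  have hM1 : ∀ z : FreeGroup α, Mlow 1 ((magnus z).val - 1) := by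
    intro z w hw
    have hwn : w = [] := List.length_eq_zero_iff.mp (by omega)
    subst hwn
    rw [sub_apply, magnus_apply_nil, one_apply]
    simp
  -- commutators vanish to order c+1
  have hcomm : ∀ h : FreeGroup α, Mlow (c+1) ((magnus (g⁻¹ * h⁻¹ * g * h)).val - 1) := by
    intro h
    set B := magnus h with hB
    set v : Mag α := B.val - 1 with hv
    have e0 : magnus (g⁻¹ * h⁻¹ * g * h) = A⁻¹ * B⁻¹ * A * B := by
      rw [map_mul, map_mul, map_mul, map_inv, map_inv]
    have e1 : (A⁻¹ * B⁻¹ * A * B).val - 1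
        = (A⁻¹).val * ((B⁻¹).val * (u * v - v * u)) := by
      have hABBA : u * v - v * u = A.val * B.val - B.val * A.val := by
        rw [hu, hv]; noncomm_ring
      rw [hABBA, mul_sub, mul_sub]
      have h2 : (B⁻¹).val * (B.val * A.val) = A.val := by
        rw [← mul_assoc, Units.inv_mul, one_mul]
      have h3 : (A⁻¹).val * A.val = 1 := Units.inv_mul A
      rw [h2, h3]
      simp [Units.val_mul, mul_assoc]
    rw [e0, e1]
    apply Mlow.mul_left
    apply Mlow.mul_left
    have huv : Mlow (c+1) (u * v) := hMc.mul (hM1 h)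
    have hvu : Mlow (c+1) (v * u) := by
      have h4 := (hM1 h).mul hMc
      rwa [Nat.add_comm] at h4
    exact huv.sub hvu
  -- all elements of the commutator closure vanish to order c+1
  have hsub : ∀ z ∈ Subgroup.closure {x : FreeGroup α | ∃ h, x = g⁻¹ * h⁻¹ * g * h},
      Mlow (c+1) ((magnus z).val - 1) := by
    intro z hz
    induction hz using Subgroup.closure_induction with
    | mem x hx =>
      obtain ⟨h, rfl⟩ := hx
      exact hcomm h
    | one => simpa using Mlow.zero (c+1)
    | mul x y hx hy ihx ihy =>
      have e : (magnus (x * y)).val - 1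
          = ((magnus x).val - 1) * (magnus y).val + ((magnus y).val - 1) := by
        rw [map_mul, Units.val_mul]; noncomm_ring
      rw [e]
      exact (ihx.mul_right _).add ihy
    | inv x hx ihx =>
      have e : (magnus x⁻¹).val - 1
          = -((magnus x⁻¹).val * ((magnus x).val - 1)) := by
        rw [map_inv, mul_sub, Units.inv_mul, mul_one]; noncomm_ring
      rw [e]
      exact (Mlow.mul_left _ ihx).neg
  -- the zpow expansion
  have hzpow : ∀ m : ℤ, Mlow (c+1) ((A ^ m).val - 1 - m • u) := by
    intro m
    induction m using Int.induction_on with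
    | zero => simpa using Mlow.zero (c+1)
    | succ m ih =>
      have e : (A ^ ((m : ℤ) + 1)).val - 1 - ((m : ℤ) + 1) • u
          = ((A ^ (m : ℤ)).val - 1 - (m : ℤ) • u) * A.val + (m : ℤ) • (u * u) := by
        rw [zpow_add_one, Units.val_mul, hAval, add_smul, one_smul, sub_mul, sub_mul,
          smul_mul_assoc, mul_add u 1 u, mul_one, smul_add, one_mul]
        abel
      rw [e]
      refine (ih.mul_right _).add ?_
      exact ((hMc.mul hMc).mono (by omega)).zsmul _
    | pred m ih =>
      set q : Mag α := (A⁻¹).val with hq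
      set t : Mag α := q - 1 with ht
      have hqv : q = 1 + t := by rw [ht]; noncomm_ring
      have hMt : Mlow c t := by
        have h1 : t = -(q * u) := by
          rw [ht, hq, hu, mul_sub, Units.inv_mul, mul_one]; noncomm_ring
        rw [h1]
        exact (Mlow.mul_left _ hMc).neg
      have hid : (t + u) + u * t = 0 := by
        have h1 : A.val * q = 1 := Units.mul_inv A
        rw [hAval, hqv] at h1
        have h2 : (1 : Mag α) + ((t + u) + u * t) = (1 + u) * (1 + t) := by noncomm_ring
        exact add_eq_left.mp (h2.trans h1)
      have htu : Mlow (c+1) (t + u) := by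
        have h1 : t + u = -(u * t) := eq_neg_of_add_eq_zero_left hid
        rw [h1]
        exact ((hMc.mul hMt).mono (by omega)).neg
      have e : (A ^ ((-m : ℤ) - 1)).val - 1 - ((-m : ℤ) - 1) • u
          = ((A ^ (-m : ℤ)).val - 1 - (-m : ℤ) • u) * q + ((t + u) + (-m : ℤ) • (u * t)) := by
        rw [zpow_sub_one, Units.val_mul, ← hq, hqv, sub_smul, one_smul, sub_mul, sub_mul,
          smul_mul_assoc, mul_add u 1 t, mul_one, smul_add, one_mul]
        abel
      rw [e]
      refine (ih.mul_right _).add (htu.add ?_)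
      exact ((hMc.mul hMt).mono (by omega)).zsmul _
  -- conclusion
  have hfin : Mlow (c+1) (n • u) := by
    have h1 : Mlow (c+1) ((magnus (g ^ n)).val - 1) := hsub _ hn
    have h2 : magnus (g ^ n) = A ^ n := by rw [map_zpow]
    rw [h2] at h1
    have h3 := h1.sub (hzpow n)
    have e : ((A ^ n).val - 1) - ((A ^ n).val - 1 - n • u) = n • u := by abel
    rwa [e] at h3
  have := hfin w0 (by omega)
  rw [zsmul_apply] at this
  rcases mul_eq_zero.mp this with h | h
  · exact h
  · exact absurd h hw0

end Mag
end Mag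

/-- In a free group `F`, every `g ≠ 1` has image of infinite order in `F/[g,F]`; consequently,
for every field `k`, every binomial element of `k F` (support of cardinality exactly `2`)
generates a proper two-sided ideal of `k F`. -/
theorem freeGroup_no_binomial {α : Type*} :
    (∀ g : FreeGroup α, g ≠ 1 →
      ¬ IsOfFinOrder (QuotientGroup.mk g : FreeGroup α ⧸ commutatorSubgroup g)) ∧
    ∀ (k : Type*) [Field k] (r : MonoidAlgebra k (FreeGroup α)),
      r.coeff.support.card = 2 → TwoSidedIdeal.span {r} ≠ ⊤ := by
  have part1 : ∀ g : FreeGroup α, g ≠ 1 →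
      ¬ IsOfFinOrder (QuotientGroup.mk g : FreeGroup α ⧸ commutatorSubgroup g) := by
    intro g hg hfin
    obtain ⟨n, hn0, hn1⟩ := isOfFinOrder_iff_pow_eq_one.mp hfin
    have h2 : ((g ^ n : FreeGroup α) : FreeGroup α ⧸ commutatorSubgroup g) = 1 := by
      rw [QuotientGroup.mk_pow]; exact hn1
    have hmem : g ^ n ∈ commutatorSubgroup g := (QuotientGroup.eq_one_iff _).mp h2
    have hmem' : g ^ (n : ℤ) ∈ Subgroup.closure {x : FreeGroup α | ∃ h, x = g⁻¹ * h⁻¹ * g * h} := by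
      rw [zpow_natCast]; exact hmem
    have := Mag.zpow_mem_commClosure_imp g hg n hmem'
    omega
  refine ⟨part1, ?_⟩
  intro k _ r hcard hspan
  classical
  obtain ⟨x, y, hxy, hsupp⟩ := Finset.card_eq_two.mp hcard
  have hx : r.coeff x ≠ 0 := Finsupp.mem_support_iff.mp (by rw [hsupp]; exact Finset.mem_insert_self x {y})
  have hy : r.coeff y ≠ 0 := Finsupp.mem_support_iff.mp
    (by rw [hsupp]; exact Finset.mem_insert_of_mem (Finset.mem_singleton_self y))
  set g : FreeGroup α := x⁻¹ * y with hgdef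
  have hgne : g ≠ 1 := by
    rw [hgdef, Ne, inv_mul_eq_one]
    exact hxy
  have hford := part1 g hgne
  have hinj : Function.Injective
      fun n : ℤ => (QuotientGroup.mk g : FreeGroup α ⧸ commutatorSubgroup g) ^ n :=
    injective_zpow_iff_not_isOfFinOrder.mpr hford
  set Q := FreeGroup α ⧸ commutatorSubgroup g with hQ
  set gq : Q := QuotientGroup.mk g with hgq
  set xq : Q := QuotientGroup.mk x with hxq
  -- gq is central in Q
  have hcen : ∀ q : Q, gq * q = q * gq := by
    intro q
    refine QuotientGroup.induction_on q ?_
    intro h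
    show (QuotientGroup.mk (g * h) : Q) = QuotientGroup.mk (h * g)
    apply QuotientGroup.eq.mpr
    have hE : (g * h)⁻¹ * (h * g) = (g⁻¹ * h⁻¹ * g * h)⁻¹ := by group
    rw [hE]
    exact inv_mem (Subgroup.subset_closure ⟨h, rfl⟩)
  set c := r.coeff x with hc
  set d := r.coeff y with hd
  set z : MonoidAlgebra k Q := MonoidAlgebra.single 1 c + MonoidAlgebra.single gq d with hz
  have hzc : ∀ s : MonoidAlgebra k Q, z * s = s * z := by
    intro s
    apply MonoidAlgebra.ext
    apply Finsupp.ext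
    intro q
    have hcomm : Commute gq q := hcen q
    have h2 := hcomm.inv_left.eq
    rw [hz, add_mul, mul_add, MonoidAlgebra.coeff_add, MonoidAlgebra.coeff_add,
      Finsupp.add_apply, Finsupp.add_apply,
      MonoidAlgebra.coeff_single_mul_apply, MonoidAlgebra.coeff_single_mul_apply,
      MonoidAlgebra.coeff_mul_single_apply, MonoidAlgebra.coeff_mul_single_apply,
      inv_one, one_mul, mul_one, h2]
    ring
  -- the two-sided ideal of left multiples of z
  set Sc : Set (MonoidAlgebra k Q) := {s | ∃ t, s = z * t} with hSc
  have hI0 : (0 : MonoidAlgebra k Q) ∈ Sc := ⟨0, by rw [mul_zero]⟩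
  have hIadd : ∀ {s₁ s₂ : MonoidAlgebra k Q}, s₁ ∈ Sc → s₂ ∈ Sc → s₁ + s₂ ∈ Sc := by
    rintro s₁ s₂ ⟨t₁, rfl⟩ ⟨t₂, rfl⟩
    exact ⟨t₁ + t₂, by rw [mul_add]⟩
  have hIneg : ∀ {s : MonoidAlgebra k Q}, s ∈ Sc → -s ∈ Sc := by
    rintro s ⟨t, rfl⟩
    exact ⟨-t, by rw [mul_neg]⟩
  have hIl : ∀ {a s : MonoidAlgebra k Q}, s ∈ Sc → a * s ∈ Sc := by
    rintro a s ⟨t, rfl⟩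
    exact ⟨a * t, by rw [← mul_assoc, ← hzc a, mul_assoc]⟩
  have hIr : ∀ {s b : MonoidAlgebra k Q}, s ∈ Sc → s * b ∈ Sc := by
    rintro s b ⟨t, rfl⟩
    exact ⟨t * b, by rw [mul_assoc]⟩
  set I : TwoSidedIdeal (MonoidAlgebra k Q) := TwoSidedIdeal.mk' Sc hI0 hIadd hIneg hIl hIr with hI
  set π : MonoidAlgebra k (FreeGroup α) →+* MonoidAlgebra k Q :=
    MonoidAlgebra.mapDomainRingHom k (QuotientGroup.mk' (commutatorSubgroup g)) with hπ
  -- decompose r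
  have hr : r = MonoidAlgebra.single x c + MonoidAlgebra.single y d := by
    apply MonoidAlgebra.ext
    apply Finsupp.ext
    intro q
    rw [MonoidAlgebra.coeff_add, Finsupp.add_apply, MonoidAlgebra.coeff_single,
      MonoidAlgebra.coeff_single, Finsupp.single_apply, Finsupp.single_apply]
    by_cases hq1 : x = q
    · subst hq1
      rw [if_pos rfl, if_neg (fun h => hxy h.symm), add_zero, hc]
    · by_cases hq2 : y = q
      · subst hq2
        rw [if_pos rfl, if_neg hq1, zero_add, hd]
      · rw [if_neg hq1, if_neg hq2, add_zero]
        apply Finsupp.notMem_support_iff.mp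
        rw [hsupp]
        simp only [Finset.mem_insert, Finset.mem_singleton]
        push_neg
        exact ⟨fun h => hq1 h.symm, fun h => hq2 h.symm⟩
  have hπr : π r = MonoidAlgebra.single xq (1 : k) * z := by
    rw [hr, map_add]
    have p1 : π (MonoidAlgebra.single x c) = MonoidAlgebra.single xq c := by
      rw [hπ]
      show MonoidAlgebra.mapDomain _ _ = _
      rw [MonoidAlgebra.mapDomain_single]
      rfl
    have p2 : π (MonoidAlgebra.single y d) = MonoidAlgebra.single (QuotientGroup.mk y : Q) d := by
      rw [hπ]
      show MonoidAlgebra.mapDomain _ _ = _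
      rw [MonoidAlgebra.mapDomain_single]
      rfl
    have hxg : xq * gq = (QuotientGroup.mk y : Q) := by
      rw [hxq, hgq]
      show ((x * g : FreeGroup α) : Q) = _
      rw [hgdef, mul_inv_cancel_left]
    rw [p1, p2, hz, mul_add, MonoidAlgebra.single_mul_single, MonoidAlgebra.single_mul_single,
      mul_one, one_mul, one_mul, hxg]
  have hπrI : π r ∈ I := by
    rw [hI, TwoSidedIdeal.mem_mk']
    exact ⟨MonoidAlgebra.single xq 1, by rw [hπr, ← hzc]⟩
  -- 1 lies in I
  have h1span : (1 : MonoidAlgebra k (FreeGroup α)) ∈ TwoSidedIdeal.span {r} := by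
    rw [hspan]; trivial
  have h2 : (1 : MonoidAlgebra k Q) ∈ I := by
    have h3 := TwoSidedIdeal.mem_span_iff.mp h1span (TwoSidedIdeal.comap π I) ?_
    · rw [TwoSidedIdeal.mem_comap, map_one] at h3
      exact h3
    · intro s hs
      rw [Set.mem_singleton_iff] at hs
      subst hs
      rw [SetLike.mem_coe, TwoSidedIdeal.mem_comap]
      exact hπrI
  rw [hI, TwoSidedIdeal.mem_mk'] at h2
  obtain ⟨t, ht⟩ := h2
  -- extract the recurrence on coefficients
  set e : ℤ → k := fun n => t.coeff (gq ^ n) with he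
  have hzpow1 : ∀ n : ℤ, gq ^ n = 1 → n = 0 := by
    intro n hn
    have : gq ^ n = gq ^ (0 : ℤ) := by rw [hn, zpow_zero]
    exact hinj this
  have heq : ∀ n : ℤ, (if n = 0 then (1 : k) else 0) = c * e n + d * e (n - 1) := by
    intro n
    have h4 := congrArg (fun s : MonoidAlgebra k Q => s.coeff (gq ^ n)) ht
    rw [hz, add_mul, MonoidAlgebra.coeff_add, Finsupp.add_apply,
      MonoidAlgebra.coeff_single_mul_apply,
      MonoidAlgebra.coeff_single_mul_apply, inv_one, one_mul] at h4
    have h5 : gq⁻¹ * gq ^ n = gq ^ (n - 1) := by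
      rw [show n - 1 = -1 + n by ring, zpow_add, zpow_neg_one]
    rw [h5] at h4
    have h6 : (1 : MonoidAlgebra k Q).coeff (gq ^ n) = if n = 0 then (1 : k) else 0 := by
      rw [MonoidAlgebra.one_def, MonoidAlgebra.coeff_single, Finsupp.single_apply]
      by_cases h : n = 0
      · subst h; simp
      · rw [if_neg h, if_neg (fun h7 => h (hzpow1 n h7.symm))]
    rw [h6] at h4
    exact h4
  -- e has finite support
  have hfinset : {n : ℤ | e n ≠ 0}.Finite := by
    apply Set.Finite.subset (Set.Finite.preimage hinj.injOn t.coeff.support.finite_toSet)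
    intro n hn
    simp only [Set.mem_preimage, Finset.mem_coe, Finsupp.mem_support_iff]
    exact hn
  have h0 : c * e 0 + d * e (-1) = 1 := by
    have h7 := heq 0
    rw [if_pos rfl, show (0 : ℤ) - 1 = -1 by decide] at h7
    exact h7.symm
  have key2 : e 0 ≠ 0 ∨ e (-1) ≠ 0 := by
    by_contra hcon
    push_neg at hcon
    rw [hcon.1, hcon.2, mul_zero, mul_zero, add_zero] at h0
    exact one_ne_zero h0.symm
  rcases key2 with hA | hB
  · have hall : ∀ m : ℕ, e (m : ℤ) ≠ 0 := by
      intro m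
      induction m with
      | zero => simpa using hA
      | succ m ih =>
        have h7 := heq ((m : ℤ) + 1)
        rw [if_neg (by omega), show ((m : ℤ) + 1) - 1 = (m : ℤ) by ring] at h7
        intro h8
        rw [show ((m + 1 : ℕ) : ℤ) = (m : ℤ) + 1 by push_cast; ring] at h8
        rw [h8, mul_zero, zero_add] at h7
        exact (mul_ne_zero hy ih) h7.symm
    refine (Set.infinite_of_injective_forall_mem (f := fun m : ℕ => (m : ℤ))
      ?_ (fun m => hall m)) hfinset
    intro a b hab
    simpa using hab
  · have hall : ∀ m : ℕ, e (-1 - (m : ℤ)) ≠ 0 := by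
      intro m
      induction m with
      | zero => simpa using hB
      | succ m ih =>
        have h7 := heq (-1 - (m : ℤ))
        rw [if_neg (by omega), show (-1 - (m : ℤ)) - 1 = -1 - ((m : ℤ) + 1) by ring] at h7
        intro h8
        rw [show ((m + 1 : ℕ) : ℤ) = (m : ℤ) + 1 by push_cast; ring] at h8
        rw [h8, mul_zero, add_zero] at h7
        exact (mul_ne_zero hx ih) h7.symm
    refine (Set.infinite_of_injective_forall_mem (f := fun m : ℕ => -1 - (m : ℤ))
      ?_ (fun m => hall m)) hfinset
    intro a b hab
    simp only at hab
    omega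
end
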